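/- Let z ∈ R^N with ε ≤ |z_i| ≤ 1/ε for all i and ε > 1 - √3/2. Let C = z z^H + Δ with Δ symmetric, and set ε' = ε² + 2ε - 2 > 0. Suppose ||Δ|| ≤ (ε'/28) N and ||Δ||_∞ ≤ (ε'/28) N, and α ≤ ||Δ||. If x ∈ T^N is a fixed point of the generalized power iteration with C̃ = C + αI satisfying |z^H x| ≥ εN - 4(||Δ|| + α), then for every u ∈ C^N with u^H x = 0 and u ≠ 0, we have u^H S(x) u > 0, where S(x) = Re(ddiag(C x x^H)) - C; hence x is the global maximizer of x^H C x over T^N. -/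

import Mathlib

open Matrix Finset

noncomputable section

/-- entrywise sign with sgn(0)=1 -/
def sgn (r : ℝ) : ℝ := if r < 0 then -1 else 1

def l1 {n : ℕ} (x : Fin n → ℝ) : ℝ := ∑ i, |x i|
def l2sq {n : ℕ} (x : Fin n → ℝ) : ℝ := ∑ i, (x i) ^ 2
def l2 {n : ℕ} (x : Fin n → ℝ) : ℝ := Real.sqrt (l2sq x)

def cl1 {n : ℕ} (x : Fin n → ℂ) : ℝ := ∑ i, ‖x i‖
def cl2sq {n : ℕ} (x : Fin n → ℂ) : ℝ := ∑ i, Complex.normSq (x i)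
def cl2 {n : ℕ} (x : Fin n → ℂ) : ℝ := Real.sqrt (cl2sq x)

/-- spectral (ℓ2 operator) norm of a real square matrix -/
def opNorm {n : ℕ} (A : Matrix (Fin n) (Fin n) ℝ) : ℝ :=
  sSup {r | ∃ x : Fin n → ℝ, l2 x = 1 ∧ r = l2 (A.mulVec x)}

/-- spectral (ℓ2 operator) norm of a complex square matrix -/
def opNormC {n : ℕ} (A : Matrix (Fin n) (Fin n) ℂ) : ℝ :=
  sSup {r | ∃ x : Fin n → ℂ, cl2 x = 1 ∧ r = cl2 (A.mulVec x)}

/-- ℓ∞ operator norm (max absolute row sum) of a real square matrix -/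
def infNorm {n : ℕ} (A : Matrix (Fin n) (Fin n) ℝ) : ℝ := ⨆ i, ∑ j, |A i j|

/-- ℓ∞ operator norm (max absolute row sum) of a complex square matrix -/
def infNormC {n : ℕ} (A : Matrix (Fin n) (Fin n) ℂ) : ℝ := ⨆ i, ∑ j, ‖A i j‖

/-- complex torus: unit-modulus entries -/
def onTorus {n : ℕ} (x : Fin n → ℂ) : Prop := ∀ i, ‖x i‖ = 1

/-- real part of the Hermitian quadratic form x ↦ xᴴ C x -/
def quadC {n : ℕ} (C : Matrix (Fin n) (Fin n) ℂ) (x : Fin n → ℂ) : ℝ :=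
  (star x ⬝ᵥ C.mulVec x).re

/-- Riemannian-Hessian-type matrix S(x) = Re(ddiag(C x xᴴ)) - C -/
def Smat {N : ℕ} (C : Matrix (Fin N) (Fin N) ℂ) (x : Fin N → ℂ) :
    Matrix (Fin N) (Fin N) ℂ :=
  Matrix.diagonal (fun i => (((C.mulVec x) i * (starRingEnd ℂ) (x i)).re : ℂ)) - C

/-! Put `Dᵢ = Re ((C x)ᵢ · conj xᵢ)`, so that `S(x) = diag D - C`. The fixed-point equation makes
`(C x)ᵢ · conj xᵢ` real and at least `‖(C x)ᵢ‖ - 2α`. With `ξ = zᵀ x` and `δ = ε' N / 28`, which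
bounds `α`, `‖Δ‖` and the rows of `Δ x`, this gives
`Dᵢ ≥ |zᵢ| ‖ξ‖ - 3δ` and `Re (zᵢ ξ conj xᵢ) ≥ |zᵢ| ‖ξ‖ - 4δ`; summing the latter over `i` shows
that `x` is aligned with `z`: `‖ξ‖ ∑ |zᵢ| - ‖ξ‖² ≤ 4δN`.

For `u ⊥ x`, Cauchy–Schwarz against the component of `z` orthogonal to `conj x` gives
`N |zᵀ u|² ≤ (N ‖z‖² - ‖ξ‖²) ‖u‖²`, hence
`N uᴴ S(x) u ≥ (ε ‖ξ‖ N + ‖ξ‖² - N ‖z‖² - 4δN) ‖u‖²`. Since `ε ≤ |zᵢ| ≤ 1/ε ≤ 2ε`, the bracket is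
positive by an elementary polynomial inequality in `ε`.

Finally `S(x) x = 0` and `S(x)` is Hermitian, so writing a point `y` of the torus as `u + c x`
with `u ⊥ x` gives `xᴴ C x - yᴴ C y = uᴴ S(x) u ≥ 0`.
-/

open scoped ComplexConjugate

section MatrixNorms

variable {n : ℕ}

lemma l2sq_nonneg (v : Fin n → ℝ) : 0 ≤ l2sq v :=
  Finset.sum_nonneg fun i _ => sq_nonneg (v i)

lemma l2_eq_norm (v : Fin n → ℝ) : l2 v = ‖WithLp.toLp 2 v‖ := by
  simp [l2, l2sq, EuclideanSpace.norm_eq]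

lemma l2_mulVec_le_opNorm (A : Matrix (Fin n) (Fin n) ℝ) (v : Fin n → ℝ) :
    l2 (A *ᵥ v) ≤ opNorm A * l2 v := by
  rcases eq_or_ne v 0 with rfl | hv
  · simp [l2_eq_norm]
  have hpos : 0 < l2 v := by
    rw [l2_eq_norm]; exact norm_pos_iff.2 (by simpa using hv)
  have hbdd : BddAbove {r | ∃ x : Fin n → ℝ, l2 x = 1 ∧ r = l2 (A *ᵥ x)} := by
    refine ⟨‖toEuclideanCLM (𝕜 := ℝ) A‖, ?_⟩
    rintro r ⟨y, hy, rfl⟩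
    rw [l2_eq_norm] at hy ⊢
    simpa [hy] using (toEuclideanCLM (𝕜 := ℝ) A).le_opNorm (WithLp.toLp 2 y)
  have hunit : l2 ((l2 v)⁻¹ • v) = 1 := by
    rw [l2_eq_norm, WithLp.toLp_smul, norm_smul, ← l2_eq_norm, Real.norm_eq_abs,
      abs_of_pos (inv_pos.2 hpos), inv_mul_cancel₀ hpos.ne']
  have h := le_csSup hbdd ⟨_, hunit, rfl⟩
  rw [mulVec_smul, l2_eq_norm, WithLp.toLp_smul, norm_smul, ← l2_eq_norm, Real.norm_eq_abs,
    abs_of_pos (inv_pos.2 hpos), inv_mul_le_iff₀ hpos] at h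
  rwa [mul_comm] at h

lemma abs_dotProduct_mulVec_le_opNorm (A : Matrix (Fin n) (Fin n) ℝ) (v : Fin n → ℝ) :
    |v ⬝ᵥ A *ᵥ v| ≤ opNorm A * l2sq v := by
  have h := abs_real_inner_le_norm (WithLp.toLp 2 v)
    (toEuclideanCLM (𝕜 := ℝ) A (WithLp.toLp 2 v))
  rw [inner_toEuclideanCLM, toEuclideanCLM_toLp, ← l2_eq_norm, ← l2_eq_norm] at h
  calc |v ⬝ᵥ A *ᵥ v| ≤ l2 v * l2 (A *ᵥ v) := h
    _ ≤ l2 v * (opNorm A * l2 v) := by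
      gcongr
      · exact Real.sqrt_nonneg _
      · exact l2_mulVec_le_opNorm A v
    _ = opNorm A * (l2 v * l2 v) := by ring
    _ = opNorm A * l2sq v := by
      rw [l2, Real.mul_self_sqrt (l2sq_nonneg v)]

lemma re_star_dotProduct_map_ofReal_mulVec (A : Matrix (Fin n) (Fin n) ℝ) (u : Fin n → ℂ) :
    (star u ⬝ᵥ A.map Complex.ofReal *ᵥ u).re =
      (fun i => (u i).re) ⬝ᵥ A *ᵥ (fun i => (u i).re) +
        (fun i => (u i).im) ⬝ᵥ A *ᵥ (fun i => (u i).im) := by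
  simp only [dotProduct, mulVec, Pi.star_apply, map_apply, Complex.re_sum, Finset.mul_sum,
    ← Finset.sum_add_distrib]
  refine Finset.sum_congr rfl fun i _ => Finset.sum_congr rfl fun j _ => ?_
  simp only [Complex.mul_re, Complex.mul_im, Complex.star_def, Complex.conj_re, Complex.conj_im,
    Complex.ofReal_re, Complex.ofReal_im]
  ring

lemma re_star_dotProduct_map_ofReal_mulVec_le (A : Matrix (Fin n) (Fin n) ℝ) (u : Fin n → ℂ) :
    (star u ⬝ᵥ A.map Complex.ofReal *ᵥ u).re ≤ opNorm A * ∑ i, Complex.normSq (u i) := by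
  have hre := le_of_abs_le (abs_dotProduct_mulVec_le_opNorm A fun i => (u i).re)
  have him := le_of_abs_le (abs_dotProduct_mulVec_le_opNorm A fun i => (u i).im)
  rw [re_star_dotProduct_map_ofReal_mulVec]
  simp only [l2sq, Complex.normSq_apply, ← sq, Finset.sum_add_distrib, mul_add] at hre him ⊢
  linarith

lemma norm_map_ofReal_mulVec_le_infNorm (A : Matrix (Fin n) (Fin n) ℝ) {x : Fin n → ℂ}
    (hx : onTorus x) (i : Fin n) : ‖(A.map Complex.ofReal *ᵥ x) i‖ ≤ infNorm A :=
  calc ‖(A.map Complex.ofReal *ᵥ x) i‖ ≤ ∑ j, ‖(A i j : ℂ) * x j‖ := by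
        simp only [mulVec, dotProduct, map_apply]; exact norm_sum_le _ _
    _ = ∑ j, |A i j| := by simp [hx _]
    _ ≤ infNorm A := le_ciSup (f := fun i => ∑ j, |A i j|) (Set.finite_range _).bddAbove i

end MatrixNorms

lemma Complex.normSq_sum_mul_le {ι : Type*} [Fintype ι] (p u : ι → ℂ) :
    Complex.normSq (∑ i, p i * u i) ≤
      (∑ i, Complex.normSq (p i)) * ∑ i, Complex.normSq (u i) := by
  simp only [← Complex.sq_norm]
  calc ‖∑ i, p i * u i‖ ^ 2 ≤ (∑ i, ‖p i‖ * ‖u i‖) ^ 2 := by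
        gcongr; exact (norm_sum_le _ _).trans_eq (by simp)
    _ ≤ _ := Finset.sum_mul_sq_le_sq_mul_sq _ _ _

lemma card_mul_normSq_sum_mul_le_of_orthogonal {ι : Type*} [Fintype ι] (z x u : ι → ℂ)
    (hx : ∀ i, ‖x i‖ = 1) (hux : star u ⬝ᵥ x = 0) :
    Fintype.card ι * Complex.normSq (∑ i, z i * u i) ≤
      (Fintype.card ι * ∑ i, Complex.normSq (z i) - Complex.normSq (∑ i, z i * x i)) *
        ∑ i, Complex.normSq (u i) := by
  set ξ := ∑ i, z i * x i
  set p : ι → ℂ := fun i => Fintype.card ι * z i - ξ * conj (x i)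
  have horth : ∑ i, conj (x i) * u i = 0 := by
    simpa [dotProduct, mul_comm] using congrArg conj hux
  have hpu : ∑ i, p i * u i = Fintype.card ι * ∑ i, z i * u i := by
    simp only [p, sub_mul, Finset.sum_sub_distrib, mul_assoc, horth, ← Finset.mul_sum, mul_zero,
      sub_zero]
  have hpz : ∑ i, (Fintype.card ι * z i * conj (ξ * conj (x i))).re =
      Fintype.card ι * Complex.normSq ξ := by
    have : ∑ i, Fintype.card ι * z i * (conj ξ * x i) = Fintype.card ι * (ξ * conj ξ) := by
      simp only [ξ, Finset.mul_sum, Finset.sum_mul]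
      exact Finset.sum_congr rfl fun i _ => by ring
    simp only [map_mul, Complex.conj_conj, ← Complex.re_sum, this, Complex.mul_conj]
    simp
  have hp : ∑ i, Complex.normSq (p i) =
      Fintype.card ι * (Fintype.card ι * ∑ i, Complex.normSq (z i) - Complex.normSq ξ) := by
    have hnx : ∀ i, Complex.normSq (x i) = 1 := fun i => by rw [← Complex.sq_norm, hx, one_pow]
    simp only [p, Complex.normSq_sub, Complex.normSq_mul, Complex.normSq_conj,
      Complex.normSq_natCast, hnx, mul_one, Finset.sum_sub_distrib, Finset.sum_add_distrib, hpz,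
      Finset.sum_const, Finset.card_univ, nsmul_eq_mul, ← Finset.mul_sum]
    ring
  have h := Complex.normSq_sum_mul_le p u
  rw [hpu, hp, Complex.normSq_mul, Complex.normSq_natCast] at h
  rcases isEmpty_or_nonempty ι
  · simp [ξ]
  rw [mul_assoc, mul_assoc] at h
  exact le_of_mul_le_mul_left h (by positivity)

section Hessian

variable {n : ℕ} (C : Matrix (Fin n) (Fin n) ℂ) (x : Fin n → ℂ)

lemma quadC_Smat (v : Fin n → ℂ) :
    quadC (Smat C x) v =
      ∑ i, ((C *ᵥ x) i * conj (x i)).re * Complex.normSq (v i) - quadC C v := by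
  simp only [quadC, Smat, sub_mulVec, dotProduct_sub, Complex.sub_re]
  congr 1
  simp only [mulVec_diagonal, dotProduct, Pi.star_apply, Complex.re_sum, Complex.star_def]
  refine Finset.sum_congr rfl fun i _ => ?_
  rw [mul_left_comm, ← Complex.normSq_eq_conj_mul_self, ← Complex.ofReal_mul, Complex.ofReal_re]

lemma Smat_mulVec_self (hx : onTorus x) (hreal : ∀ i, ((C *ᵥ x) i * conj (x i)).im = 0) :
    Smat C x *ᵥ x = 0 := by
  funext i
  have hxi : conj (x i) * x i = 1 := by
    rw [← Complex.normSq_eq_conj_mul_self, ← Complex.sq_norm, hx i]; simp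
  have hre : (((C *ᵥ x) i * conj (x i)).re : ℂ) = (C *ᵥ x) i * conj (x i) :=
    Complex.ext rfl (by simp [hreal i])
  simp only [Smat, sub_mulVec, mulVec_diagonal, Pi.sub_apply, hre, mul_assoc, hxi, mul_one,
    sub_self, Pi.zero_apply]

lemma isHermitian_Smat (hC : C.IsHermitian) : (Smat C x).IsHermitian :=
  (isHermitian_diagonal_of_self_adjoint _ (by ext i; simp)).sub hC

lemma quadC_add_smul_of_mulVec_eq_zero {A : Matrix (Fin n) (Fin n) ℂ} (hA : A.IsHermitian)
    (hAx : A *ᵥ x = 0) (u : Fin n → ℂ) (c : ℂ) : quadC A (u + c • x) = quadC A u := by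
  have hxA : star x ⬝ᵥ A *ᵥ u = 0 := by
    rw [dotProduct_mulVec, ← hA.eq, ← star_mulVec, hAx, star_zero, zero_dotProduct]
  simp [quadC, mulVec_add, mulVec_smul, hAx, hxA]

lemma exists_eq_add_smul_of_star_dotProduct_eq_zero (y : Fin n → ℂ) :
    ∃ (u : Fin n → ℂ) (c : ℂ), y = u + c • x ∧ star u ⬝ᵥ x = 0 := by
  refine ⟨y - (star x ⬝ᵥ y / (star x ⬝ᵥ x)) • x, _, (sub_add_cancel _ _).symm, ?_⟩
  rcases eq_or_ne x 0 with rfl | hx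
  · simp
  have hxx : star x ⬝ᵥ x ≠ 0 := by
    open scoped ComplexOrder in exact mt dotProduct_star_self_eq_zero.1 hx
  rw [star_dotProduct, dotProduct_sub, dotProduct_smul, smul_eq_mul, div_mul_cancel₀ _ hxx,
    sub_self, star_zero]

theorem quadC_le_of_quadC_Smat_nonneg (hC : C.IsHermitian) (hx : onTorus x)
    (hreal : ∀ i, ((C *ᵥ x) i * conj (x i)).im = 0)
    (hS : ∀ u, star u ⬝ᵥ x = 0 → 0 ≤ quadC (Smat C x) u) {y : Fin n → ℂ} (hy : onTorus y) :
    quadC C y ≤ quadC C x := by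
  have hquad : ∀ v, onTorus v →
      quadC C v = ∑ i, ((C *ᵥ x) i * conj (x i)).re - quadC (Smat C x) v := fun v hv => by
    simp [quadC_Smat, ← Complex.sq_norm, hv _]
  have hSx := Smat_mulVec_self C x hx hreal
  obtain ⟨u, c, rfl, hu⟩ := exists_eq_add_smul_of_star_dotProduct_eq_zero x y
  rw [hquad _ hy, hquad _ hx, quadC_add_smul_of_mulVec_eq_zero x (isHermitian_Smat C x hC) hSx]
  have : quadC (Smat C x) x = 0 := by simp [quadC, hSx]
  linarith [hS u hu]

end Hessian

lemma card_mul_sum_sq_le {ι : Type*} [Fintype ι] {a : ℝ} {w : ι → ℝ} (hlo : ∀ i, a ≤ w i)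
    (hhi : ∀ i, w i ≤ 2 * a) :
    Fintype.card ι * ∑ i, w i ^ 2 ≤
      a * (∑ i, w i) * Fintype.card ι + (∑ i, w i) ^ 2 - a ^ 2 * Fintype.card ι ^ 2 := by
  have hsq : ∑ i, (w i - a) ^ 2 ≤ a * ∑ i, (w i - a) := by
    rw [Finset.mul_sum]
    exact Finset.sum_le_sum fun i _ => by nlinarith [hlo i, hhi i]
  have hw : ∑ i, w i = a * Fintype.card ι + ∑ i, (w i - a) := by
    simp only [Finset.sum_sub_distrib, Finset.sum_const, Finset.card_univ, nsmul_eq_mul]; ring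
  have hw2 : ∑ i, w i ^ 2 =
      a ^ 2 * Fintype.card ι + 2 * a * ∑ i, (w i - a) + ∑ i, (w i - a) ^ 2 := by
    simp only [sub_sq, Finset.sum_add_distrib, Finset.sum_sub_distrib, ← Finset.mul_sum,
      ← Finset.sum_mul, Finset.sum_const, Finset.card_univ, nsmul_eq_mul]
    ring
  rw [hw2, hw]
  nlinarith [mul_le_mul_of_nonneg_left hsq (Nat.cast_nonneg (α := ℝ) (Fintype.card ι)),
    sq_nonneg (∑ i, (w i - a))]

lemma spectral_gap_pos {ε n δ ρ t s : ℝ} (hε0 : 0 < ε) (hε1 : ε ≤ 1) (hn : 0 < n)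
    (hε' : 0 < ε ^ 2 + 2 * ε - 2) (hδ : δ = (ε ^ 2 + 2 * ε - 2) / 28 * n)
    (hρ : ε * n - 8 * δ ≤ ρ) (hρt : ρ ≤ t) (hεt : ε * t ≤ n) (halign : ρ * t - ρ ^ 2 ≤ 4 * δ * n)
    (hs : s * n ≤ ε * t * n + t ^ 2 - ε ^ 2 * n ^ 2) :
    0 < ε * ρ * n + ρ ^ 2 - s * n - 4 * δ * n := by
  have hδ0 : 0 ≤ δ := hδ ▸ by positivity
  have hρmin : 0 < ε * n - 8 * δ := by
    rw [hδ]; nlinarith [mul_pos (by nlinarith : (0 : ℝ) < -2 * ε ^ 2 + 3 * ε + 4) hn]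
  have hsum : ε * (ε * n + t + ρ) ≤ 3 * n := by
    nlinarith [mul_le_mul_of_nonneg_left hρt hε0.le, mul_le_mul_of_nonneg_right
      (pow_le_one₀ hε0.le hε1 : ε ^ 2 ≤ 1) hn.le]
  have hquad0 : 0 ≤ ε ^ 2 * n ^ 2 - 4 * δ * n := by
    rw [hδ]; nlinarith [mul_nonneg (mul_pos hn hn).le (by nlinarith [sq_nonneg (6 * ε - 1)] :
      (0 : ℝ) ≤ 6 * ε ^ 2 - 2 * ε + 2)]
  -- after substituting `δ`, this is `n³ / 49` times the quintic in `hG`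
  have hcubic : 0 < ε * (ε * n - 8 * δ) * (ε ^ 2 * n ^ 2 - 4 * δ * n) - 12 * δ * n ^ 2 := by
    have hP : 0 ≤ 12 * ε ^ 4 - 10 * ε ^ 3 - 24 * ε ^ 2 - ε + 33 := by
      nlinarith [mul_nonneg (sub_nonneg.2 hε1)
        (by nlinarith : (0 : ℝ) ≤ -12 * ε ^ 3 - 2 * ε ^ 2 + 22 * ε + 23)]
    have hG : 0 < -12 * ε ^ 5 + 22 * ε ^ 4 + 14 * ε ^ 3 - 23 * ε ^ 2 - 34 * ε + 42 := by
      nlinarith [mul_nonneg (sub_nonneg.2 hε1) hP]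
    rw [hδ]; nlinarith [mul_pos (pow_pos hn 3) hG]
  have hgap : ε ^ 2 * n ^ 2 - (t - ρ) * (ε * n + t + ρ) - 4 * δ * n ≤
      ε * ρ * n + ρ ^ 2 - s * n - 4 * δ * n := by nlinarith
  have hρpos : 0 < ρ := hρmin.trans_le hρ
  have htail : ε * ρ * ((t - ρ) * (ε * n + t + ρ)) ≤ 12 * δ * n ^ 2 := by
    calc ε * ρ * ((t - ρ) * (ε * n + t + ρ)) = (ρ * (t - ρ)) * (ε * (ε * n + t + ρ)) := by ring
      _ ≤ (4 * δ * n) * (3 * n) :=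
        mul_le_mul (by linarith) hsum (by nlinarith) (by positivity)
      _ = 12 * δ * n ^ 2 := by ring
  have hhead := mul_le_mul_of_nonneg_right (mul_le_mul_of_nonneg_left hρ hε0.le) hquad0
  have hmain : 0 < ε * ρ * (ε ^ 2 * n ^ 2 - (t - ρ) * (ε * n + t + ρ) - 4 * δ * n) := by
    nlinarith
  exact (pos_of_mul_pos_right hmain (by positivity)).trans_le hgap

lemma re_mul_conj_of_shifted_fixed {b w : ℂ} {α : ℝ} (hα : 0 ≤ α) (hw : ‖w‖ = 1)
    (h : (b + α * w) * conj w = ‖b + α * w‖) :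
    (b * conj w).im = 0 ∧ ‖b‖ - 2 * α ≤ (b * conj w).re := by
  have hww : w * conj w = 1 := by
    rw [Complex.mul_conj, ← Complex.sq_norm, hw, one_pow, Complex.ofReal_one]
  have hb : b * conj w = ((‖b + α * w‖ - α : ℝ) : ℂ) := by
    push_cast
    linear_combination h - α * hww
  have hαw : ‖(α : ℂ) * w‖ = α := by
    rw [norm_mul, hw, mul_one, Complex.norm_real, Real.norm_of_nonneg hα]
  have htri := norm_sub_le (b + α * w) (α * w)
  rw [add_sub_cancel_right, hαw] at htri
  rw [hb, Complex.ofReal_im, Complex.ofReal_re]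
  exact ⟨rfl, by linarith⟩

lemma re_mul_conj_bounds {a r w : ℂ} {δ : ℝ} (hw : ‖w‖ = 1) (hr : ‖r‖ ≤ δ)
    (h : ‖a + r‖ - 2 * δ ≤ ((a + r) * conj w).re) :
    ‖a‖ - 3 * δ ≤ ((a + r) * conj w).re ∧ ‖a‖ - 4 * δ ≤ (a * conj w).re := by
  have hrw : |(r * conj w).re| ≤ δ :=
    (Complex.abs_re_le_norm _).trans (by rwa [norm_mul, Complex.norm_conj, hw, mul_one])
  have ha : ‖a‖ - δ ≤ ‖a + r‖ := by
    have := norm_sub_le (a + r) r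
    rw [add_sub_cancel_right] at this
    linarith
  rw [add_mul, Complex.add_re] at h ⊢
  constructor <;> linarith [abs_le.1 hrw]

lemma isHermitian_rankOne_add_map_ofReal {N : ℕ} (z : Fin N → ℝ) {Δ : Matrix (Fin N) (Fin N) ℝ}
    (hΔ : Δ.IsSymm) :
    (Matrix.of (fun i j => ((z i * z j : ℝ) : ℂ)) + Δ.map Complex.ofReal).IsHermitian := by
  ext i j
  simp [mul_comm, hΔ.apply i j]

section RankOnePerturbation

variable {N : ℕ} (z : Fin N → ℝ) (Δ : Matrix (Fin N) (Fin N) ℂ)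

local notation "C₀" => Matrix.of (fun i j => ((z i * z j : ℝ) : ℂ)) + Δ

lemma rankOne_add_mulVec_apply (x : Fin N → ℂ) (i : Fin N) :
    (C₀ *ᵥ x) i = z i * ∑ j, z j * x j + (Δ *ᵥ x) i := by
  rw [add_mulVec, Pi.add_apply]
  simp only [mulVec, dotProduct, of_apply, Finset.mul_sum, Complex.ofReal_mul, mul_assoc]

lemma quadC_rankOne_add (u : Fin N → ℂ) :
    quadC C₀ u = Complex.normSq (∑ i, z i * u i) + (star u ⬝ᵥ Δ *ᵥ u).re := by
  have h : star u ⬝ᵥ (Matrix.of fun i j => ((z i * z j : ℝ) : ℂ)) *ᵥ u =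
      (∑ i, z i * u i) * conj (∑ i, z i * u i) := by
    simp only [dotProduct, mulVec, of_apply, Pi.star_apply, Complex.star_def, map_sum, map_mul,
      Complex.conj_ofReal, Finset.sum_mul, Finset.mul_sum, Complex.ofReal_mul]
    exact Finset.sum_congr rfl fun i _ => Finset.sum_congr rfl fun j _ => by ring
  rw [quadC, add_mulVec, dotProduct_add, Complex.add_re, h, Complex.mul_conj, Complex.ofReal_re]

lemma card_mul_quadC_Smat_ge {x u : Fin N → ℂ} (hx : onTorus x) (hux : star u ⬝ᵥ x = 0)
    {m δ : ℝ} (hD : ∀ i, m ≤ ((C₀ *ᵥ x) i * conj (x i)).re)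
    (hΔ : (star u ⬝ᵥ Δ *ᵥ u).re ≤ δ * ∑ i, Complex.normSq (u i)) :
    ((m - δ) * N - (N * ∑ i, z i ^ 2 - ‖∑ i, z i * x i‖ ^ 2)) * ∑ i, Complex.normSq (u i) ≤
      N * quadC (Smat C₀ x) u := by
  have hcs := card_mul_normSq_sum_mul_le_of_orthogonal (fun i => (z i : ℂ)) x u hx hux
  simp only [Fintype.card_fin, Complex.normSq_ofReal] at hcs
  have hdiag : m * ∑ i, Complex.normSq (u i) ≤
      ∑ i, ((C₀ *ᵥ x) i * conj (x i)).re * Complex.normSq (u i) := by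
    rw [Finset.mul_sum]
    exact Finset.sum_le_sum fun i _ => mul_le_mul_of_nonneg_right (hD i) (Complex.normSq_nonneg _)
  rw [quadC_Smat, quadC_rankOne_add, Complex.sq_norm]
  simp only [sq]
  have hN : (0 : ℝ) ≤ N := Nat.cast_nonneg N
  nlinarith [mul_le_mul_of_nonneg_left hdiag hN, mul_le_mul_of_nonneg_left hΔ hN]

theorem quadC_Smat_rankOne_add_pos {ε δ : ℝ} {x u : Fin N → ℂ} (hε0 : 0 < ε)
    (hz : ∀ i, ε ≤ |z i| ∧ |z i| ≤ 1 / ε) (hε' : 0 < ε ^ 2 + 2 * ε - 2)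
    (hδ : δ = (ε ^ 2 + 2 * ε - 2) / 28 * N) (hx : onTorus x) (hrow : ∀ i, ‖(Δ *ᵥ x) i‖ ≤ δ)
    (hΔ : (star u ⬝ᵥ Δ *ᵥ u).re ≤ δ * ∑ i, Complex.normSq (u i))
    (hD : ∀ i, ‖(C₀ *ᵥ x) i‖ - 2 * δ ≤ ((C₀ *ᵥ x) i * conj (x i)).re)
    (hgood : ε * N - 8 * δ ≤ ‖∑ i, z i * x i‖) (hu : u ≠ 0) (hux : star u ⬝ᵥ x = 0) :
    0 < quadC (Smat C₀ x) u := by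
  obtain ⟨i₀, hi₀⟩ := Function.ne_iff.1 hu
  have hN : (0 : ℝ) < N := Nat.cast_pos.2 i₀.pos
  have hε1 : ε ≤ 1 := by
    have := (hz i₀).1.trans (hz i₀).2
    rw [le_div_iff₀ hε0] at this
    nlinarith
  set ξ := ∑ i, z i * x i
  have hentry (i : Fin N) : |z i| * ‖ξ‖ - 3 * δ ≤ ((C₀ *ᵥ x) i * conj (x i)).re ∧
      |z i| * ‖ξ‖ - 4 * δ ≤ (z i * ξ * conj (x i)).re := by
    have := re_mul_conj_bounds (a := z i * ξ) (hx i) (hrow i)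
      (by rw [← rankOne_add_mulVec_apply]; exact hD i)
    rw [norm_mul, Complex.norm_real, Real.norm_eq_abs] at this
    rwa [rankOne_add_mulVec_apply]
  have hsum : ∑ i, (z i * ξ * conj (x i)).re = ‖ξ‖ ^ 2 := by
    have : ∑ i, z i * ξ * conj (x i) = ξ * conj ξ := by
      simp only [ξ, map_sum, map_mul, Complex.conj_ofReal, Finset.mul_sum, Finset.sum_mul]
      exact Finset.sum_congr rfl fun i _ => Finset.sum_congr rfl fun j _ => by ring
    rw [← Complex.re_sum, this, Complex.mul_conj, Complex.ofReal_re, Complex.sq_norm]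
  have halign : ‖ξ‖ * ∑ i, |z i| - ‖ξ‖ ^ 2 ≤ 4 * δ * N := by
    have := Finset.sum_le_sum fun i (_ : i ∈ Finset.univ) => (hentry i).2
    simp only [Finset.sum_sub_distrib, hsum, ← Finset.sum_mul, Finset.sum_const,
      Finset.card_univ, Fintype.card_fin, nsmul_eq_mul] at this
    linarith
  have hρt : ‖ξ‖ ≤ ∑ i, |z i| := (norm_sum_le _ _).trans_eq (by simp [hx _])
  have hεz (i : Fin N) : ε * |z i| ≤ 1 := by
    have := (le_div_iff₀ hε0).1 (hz i).2
    linarith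
  have hεt : ε * ∑ i, |z i| ≤ N := by
    rw [Finset.mul_sum]
    exact (Finset.sum_le_sum fun i _ => hεz i).trans_eq (by simp)
  have hs := card_mul_sum_sq_le (w := fun i => |z i|) (fun i => (hz i).1)
    (fun i => (hz i).2.trans ((div_le_iff₀ hε0).2 (by nlinarith)))
  simp only [sq_abs, Fintype.card_fin] at hs
  have hgap := spectral_gap_pos hε0 hε1 hN hε' hδ hgood hρt hεt halign (by linarith [hs])
  have hlow := card_mul_quadC_Smat_ge z Δ hx hux (m := ε * ‖ξ‖ - 3 * δ)
    (fun i => by nlinarith [(hentry i).1, (hz i).1, norm_nonneg ξ]) hΔ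
  have hnsq : 0 < ∑ i, Complex.normSq (u i) :=
    Finset.sum_pos' (fun i _ => Complex.normSq_nonneg _)
      ⟨i₀, Finset.mem_univ _, Complex.normSq_pos.2 hi₀⟩
  exact pos_of_mul_pos_right (by nlinarith [mul_pos hgap hnsq]) hN.le

end RankOnePerturbation

theorem stmt_8 {N : ℕ} (z : Fin N → ℝ) (ε : ℝ) (hε1 : 1 - Real.sqrt 3 / 2 < ε)
    (hz : ∀ i, ε ≤ |z i| ∧ |z i| ≤ 1 / ε)
    (Δ : Matrix (Fin N) (Fin N) ℝ) (hΔ : Δ.IsSymm)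
    (ε' : ℝ) (hε' : ε' = ε ^ 2 + 2 * ε - 2) (hε'pos : 0 < ε')
    (hΔop : opNorm Δ ≤ ε' / 28 * N) (hΔinf : infNorm Δ ≤ ε' / 28 * N)
    (α : ℝ) (hα0 : 0 ≤ α) (hα : α ≤ opNorm Δ)
    (C : Matrix (Fin N) (Fin N) ℂ)
    (hC : C = Matrix.of (fun i j => ((z i * z j : ℝ) : ℂ)) + Δ.map (Complex.ofReal ·))
    (x : Fin N → ℂ) (hx : onTorus x)
    (hfix : ∀ i, ((C + (α : ℂ) • (1 : Matrix (Fin N) (Fin N) ℂ)).mulVec x) i *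
        (starRingEnd ℂ) (x i) =
        (‖((C + (α : ℂ) • (1 : Matrix (Fin N) (Fin N) ℂ)).mulVec x) i‖ : ℂ))
    (hgood : ε * N - 4 * (opNorm Δ + α) ≤ ‖(fun i => (z i : ℂ)) ⬝ᵥ x‖) :
    (∀ u : Fin N → ℂ, u ≠ 0 → star u ⬝ᵥ x = 0 → 0 < quadC (Smat C x) u) ∧
      (∀ y : Fin N → ℂ, onTorus y → quadC C y ≤ quadC C x) := by
  have hε0 : 0 < ε := by
    nlinarith [Real.sq_sqrt (show (0 : ℝ) ≤ 3 by norm_num), Real.sqrt_nonneg 3]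
  have hentry (i : Fin N) := re_mul_conj_of_shifted_fixed hα0 (hx i)
    (by simpa only [add_mulVec, smul_mulVec, one_mulVec, Pi.add_apply, Pi.smul_apply,
      smul_eq_mul] using hfix i)
  subst hε'
  have hpos : ∀ u, u ≠ 0 → star u ⬝ᵥ x = 0 → 0 < quadC (Smat C x) u := by
    subst hC
    intro u hu hux
    refine quadC_Smat_rankOne_add_pos z _ hε0 hz hε'pos rfl hx
      (fun i => (norm_map_ofReal_mulVec_le_infNorm Δ hx i).trans hΔinf)
      ((re_star_dotProduct_map_ofReal_mulVec_le Δ u).trans ?_)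
      (fun i => by linarith [(hentry i).2, hα.trans hΔop])
      (by simp only [dotProduct] at hgood; linarith [hα.trans hΔop]) hu hux
    exact mul_le_mul_of_nonneg_right hΔop (Finset.sum_nonneg fun i _ => Complex.normSq_nonneg _)
  refine ⟨hpos, fun y hy => quadC_le_of_quadC_Smat_nonneg C x
    (hC ▸ isHermitian_rankOne_add_map_ofReal z hΔ) hx (fun i => (hentry i).1) (fun u hux => ?_) hy⟩
  rcases eq_or_ne u 0 with rfl | hu
  · simp [quadC]
  · exact (hpos u hu hux).le
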